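/- A closed subspace J of L¹(ℝ) is an ideal in the Banach algebra (L¹(ℝ), ⋆_A) if and only if it is invariant under all A-translations T^A_x, x ∈ ℝ. -/

import Mathlib

/-!
Write `Φ s ∈ L¹(ℝ)` for the class of `T^A_s f`. The map `s ↦ Φ s` is continuous: `T^A_s f` is an
ordinary translate of `f` times a unimodular phase, so continuity of translation in `L¹` and
dominated convergence apply. By Fubini, `g ⋆_A f = (2π|b|)^{-1/2} ∫ g(s) • Φ s ds` as a Bochner
integral in `L¹`. If `J` is invariant, every `Φ s` lies in the closed subspace `J`, hence so does
the integral. Conversely, `Φ x` is the limit of the averages `r⁻¹ ∫_x^{x+r} Φ s ds`, which are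
`A`-convolutions of `f` with box kernels and so lie in `J` when `J` is an ideal.
-/

open MeasureTheory

/-- The `A`-translation `T^A_x f(t) = e^{-i(a/b)x(t-x)} f(t-x)`. -/
noncomputable def Atrans (a b x : ℝ) (f : ℝ → ℂ) (t : ℝ) : ℂ :=
  Complex.exp (-Complex.I * ((a : ℂ) / b) * x * ((t : ℂ) - x)) * f (t - x)

/-- The `A`-convolution of two functions. -/
noncomputable def convA (a b : ℝ) (g f : ℝ → ℂ) (t : ℝ) : ℂ :=
  (Real.sqrt (2 * Real.pi * |b|) : ℂ)⁻¹ * ∫ s : ℝ, g s * Atrans a b s f t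

open Filter Topology

theorem tendsto_integral_norm_comp_sub_sub {E : Type*} [NormedAddCommGroup E] {f : ℝ → E}
    (hf : Integrable f) (x : ℝ) :
    Tendsto (fun s => ∫ t, ‖f (t - s) - f (t - x)‖) (𝓝 x) (𝓝 0) := by
  let shift : C(ℝ, C(ℝ, ℝ)) := ContinuousMap.curry ⟨fun p : ℝ × ℝ => p.2 - p.1, by fun_prop⟩
  have hshift (s : ℝ) : MeasurePreserving (shift s) := measurePreserving_sub_right volume s
  let τ (s : ℝ) : ℝ →₁[volume] E := Lp.compMeasurePreserving (shift s) (hshift s) (hf.toL1 f)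
  have hτ : Continuous τ :=
    continuous_const.compMeasurePreservingLp shift.continuous hshift ENNReal.one_ne_top
  have hτ_coe (s : ℝ) : τ s =ᵐ[volume] fun t => f (t - s) :=
    (Lp.coeFn_compMeasurePreserving _ _).trans
      ((hshift s).quasiMeasurePreserving.ae_eq_comp hf.coeFn_toL1)
  have hdist (s : ℝ) : dist (τ s) (τ x) = ∫ t, ‖f (t - s) - f (t - x)‖ := by
    rw [dist_eq_norm, L1.norm_eq_integral_norm]
    refine integral_congr_ae ?_
    filter_upwards [Lp.coeFn_sub (τ s) (τ x), hτ_coe s, hτ_coe x] with t h h1 h2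
    rw [h, Pi.sub_apply, h1, h2]
  simpa only [hdist] using tendsto_iff_dist_tendsto_zero.mp (hτ.tendsto x)

theorem Submodule.integral_mem_of_isClosed {X E : Type*} [MeasurableSpace X] {μ : Measure X}
    [NormedAddCommGroup E] [NormedSpace ℝ E] [CompleteSpace E] {S : Submodule ℝ E}
    (hS : IsClosed (S : Set E)) {Φ : X → E} (hΦ : ∀ x, Φ x ∈ S) : ∫ x, Φ x ∂μ ∈ S := by
  have : CompleteSpace S := hS.completeSpace_coe
  have h := S.subtypeₗᵢ.integral_comp_comm (μ := μ) fun x => (⟨Φ x, hΦ x⟩ : S)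
  exact h ▸ (∫ x, (⟨Φ x, hΦ x⟩ : S) ∂μ).2

theorem L1.coeFn_integral_ae_eq_integral {α β E : Type*} [MeasurableSpace α]
    [MeasurableSpace β] {μ : Measure α} {ν : Measure β} [SFinite μ] [SigmaFinite ν]
    [NormedAddCommGroup E] [NormedSpace ℝ E] [CompleteSpace E] {Φ : α → β →₁[ν] E}
    (hΦ : Integrable Φ μ) {F : α × β → E} (hF : Integrable F (μ.prod ν))
    (hΦF : ∀ᵐ s ∂μ, Φ s =ᵐ[ν] fun t => F (s, t)) :
    ((∫ s, Φ s ∂μ : β →₁[ν] E) : β → E) =ᵐ[ν] fun t => ∫ s, F (s, t) ∂μ := by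
  refine ae_eq_of_forall_setIntegral_eq_of_sigmaFinite
    (fun _ _ _ => (L1.integrable_coeFn _).integrableOn)
    (fun _ _ _ => hF.integral_prod_right.integrableOn) fun T _ _ => ?_
  let setIntegral : (β →₁[ν] E) →L[ℝ] E := L1.integralCLM.comp (LpToLpRestrictCLM β E ℝ ν 1 T)
  have h_setIntegral (h : β →₁[ν] E) : setIntegral h = ∫ t in T, h t ∂ν := by
    rw [← integral_congr_ae (LpToLpRestrictCLM_coeFn ℝ T h), ← L1.integral_eq_integral,
      L1.integral_eq]
    rfl
  have hF_restrict : Integrable F (μ.prod (ν.restrict T)) := by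
    have h := hF.restrict (s := Set.univ ×ˢ T)
    rwa [← Measure.prod_restrict, Measure.restrict_univ] at h
  calc ∫ t in T, (∫ s, Φ s ∂μ) t ∂ν
      = ∫ s, setIntegral (Φ s) ∂μ := by
        rw [← h_setIntegral, setIntegral.integral_comp_comm hΦ]
    _ = ∫ s, ∫ t in T, F (s, t) ∂ν ∂μ := by
        refine integral_congr_ae ?_
        filter_upwards [hΦF] with s hs
        rw [h_setIntegral, integral_congr_ae (ae_restrict_of_ae hs)]
    _ = ∫ t in T, ∫ s, F (s, t) ∂μ ∂ν := integral_integral_swap hF_restrict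

theorem mem_closure_of_forall_integral_smul_mem {E : Type*} [NormedAddCommGroup E]
    [NormedSpace ℂ E] [CompleteSpace E] {Φ : ℝ → E} (hΦ : Continuous Φ) {S : Set E}
    (hS : ∀ g : ℝ → ℂ, Integrable g → ∫ s, g s • Φ s ∈ S) (x : ℝ) : Φ x ∈ closure S := by
  -- Fundamental theorem of calculus: `r⁻¹ ∫_x^{x+r} Φ → Φ x` as `r → 0⁺`.
  have hFTC := ((hΦ.integral_hasStrictDerivAt x x).hasDerivAt).tendsto_slope_zero_right
  refine mem_closure_of_tendsto hFTC (eventually_mem_nhdsWithin.mono fun r (hr : 0 < r) => ?_)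
  have hbox : Integrable ((Set.Ioc x (x + r)).indicator fun _ => ((r⁻¹ : ℝ) : ℂ)) :=
    (integrable_indicator_iff measurableSet_Ioc).mpr (integrableOn_const measure_Ioc_lt_top.ne)
  convert hS _ hbox using 1
  simp_rw [← Set.indicator_smul_apply_left, integral_indicator measurableSet_Ioc,
    integral_smul, intervalIntegral.integral_same, sub_zero,
    intervalIntegral.integral_of_le (by linarith : x ≤ x + r), Complex.coe_smul]

noncomputable def atransPhase (a b x t : ℝ) : ℂ :=
  Complex.exp (-Complex.I * ((a : ℂ) / b) * x * ((t : ℂ) - x))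

section Atrans

variable (a b : ℝ)

theorem Atrans_apply (x : ℝ) (f : ℝ → ℂ) (t : ℝ) :
    Atrans a b x f t = atransPhase a b x t * f (t - x) :=
  rfl

theorem norm_atransPhase (x t : ℝ) : ‖atransPhase a b x t‖ = 1 := by
  have h : -Complex.I * ((a : ℂ) / b) * x * ((t : ℂ) - x)
      = ((-(a / b * x * (t - x)) : ℝ) : ℂ) * Complex.I := by
    push_cast; ring
  rw [atransPhase, h, Complex.norm_exp_ofReal_mul_I]

theorem continuous_atransPhase : Continuous fun p : ℝ × ℝ => atransPhase a b p.1 p.2 := by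
  unfold atransPhase; fun_prop

theorem norm_Atrans (x : ℝ) (f : ℝ → ℂ) (t : ℝ) : ‖Atrans a b x f t‖ = ‖f (t - x)‖ := by
  rw [Atrans_apply, norm_mul, norm_atransPhase, one_mul]

variable {a b} {f : ℝ → ℂ}

theorem MeasureTheory.Integrable.Atrans (hf : Integrable f) (x : ℝ) :
    Integrable (Atrans a b x f) :=
  (hf.comp_sub_right x).bdd_mul
    ((continuous_atransPhase a b).comp (Continuous.prodMk_right x)).aestronglyMeasurable
    (c := 1) (.of_forall fun t => (norm_atransPhase a b x t).le)

theorem integrable_mul_Atrans {g : ℝ → ℂ} (hg : Integrable g) (hf : Integrable f) :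
    Integrable (fun p : ℝ × ℝ => g p.1 * Atrans a b p.1 f p.2) (volume.prod volume) := by
  -- up to the unimodular phase, this is the integrand of the ordinary convolution `g ⋆ f`
  have h := (hg.convolution_integrand (ContinuousLinearMap.mul ℂ ℂ) hf).swap.bdd_mul
    (continuous_atransPhase a b).aestronglyMeasurable
    (c := 1) (.of_forall fun p => (norm_atransPhase a b p.1 p.2).le)
  refine h.congr (.of_forall fun p => ?_)
  simp only [Function.comp_apply, Prod.fst_swap, Prod.snd_swap, ContinuousLinearMap.mul_apply',
    Atrans_apply]
  ring

theorem tendsto_integral_norm_Atrans_sub (hf : Integrable f) (x : ℝ) :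
    Tendsto (fun s => ∫ t, ‖Atrans a b s f t - Atrans a b x f t‖) (𝓝 x) (𝓝 0) := by
  have hphase (t : ℝ) : Continuous fun s => atransPhase a b s t :=
    (continuous_atransPhase a b).comp (Continuous.prodMk_left t)
  have hphase' (s : ℝ) : Continuous fun t => atransPhase a b s t :=
    (continuous_atransPhase a b).comp (Continuous.prodMk_right s)
  have hphase_sub (s t : ℝ) : ‖atransPhase a b s t - atransPhase a b x t‖ ≤ 2 :=
    (norm_sub_le _ _).trans (by rw [norm_atransPhase, norm_atransPhase]; norm_num)
  have hfx := hf.comp_sub_right x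
  have htrans_int (s : ℝ) : Integrable fun t => ‖f (t - s) - f (t - x)‖ :=
    ((hf.comp_sub_right s).sub hfx).norm
  have hmod_int (s : ℝ) :
      Integrable fun t => (atransPhase a b s t - atransPhase a b x t) * f (t - x) :=
    hfx.bdd_mul ((hphase' s).sub (hphase' x)).aestronglyMeasurable (.of_forall (hphase_sub s))
  have hmod : Tendsto (fun s => ∫ t, ‖(atransPhase a b s t - atransPhase a b x t) * f (t - x)‖)
      (𝓝 x) (𝓝 0) := by
    have h := tendsto_integral_filter_of_dominated_convergence (fun t => 2 * ‖f (t - x)‖)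
      (.of_forall fun s => (hmod_int s).norm.aestronglyMeasurable)
      (.of_forall fun s => .of_forall fun t => ?_) (hfx.norm.const_mul 2)
      (.of_forall fun t => (((hphase t).tendsto x).sub_const _ |>.mul_const _).norm)
    · simpa using h
    · rw [norm_norm, norm_mul]
      exact mul_le_mul_of_nonneg_right (hphase_sub s t) (norm_nonneg _)
  have hsplit (s : ℝ) : ∫ t, ‖Atrans a b s f t - Atrans a b x f t‖
      ≤ (∫ t, ‖f (t - s) - f (t - x)‖)
        + ∫ t, ‖(atransPhase a b s t - atransPhase a b x t) * f (t - x)‖ := by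
    rw [← integral_add (htrans_int s) (hmod_int s).norm]
    refine integral_mono ((hf.Atrans s).sub (hf.Atrans x)).norm
      ((htrans_int s).add (hmod_int s).norm) fun t => ?_
    have h : Atrans a b s f t - Atrans a b x f t
        = atransPhase a b s t * (f (t - s) - f (t - x))
          + (atransPhase a b s t - atransPhase a b x t) * f (t - x) := by
      rw [Atrans_apply, Atrans_apply]; ring
    rw [h]
    refine (norm_add_le _ _).trans ?_
    rw [norm_mul, norm_atransPhase, one_mul]
  refine squeeze_zero (fun s => integral_nonneg fun t => norm_nonneg _) hsplit ?_
  simpa using (tendsto_integral_norm_comp_sub_sub hf x).add hmod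

variable (a b) in
noncomputable def AtransL1 (hf : Integrable f) (s : ℝ) : ℝ →₁[volume] ℂ :=
  Integrable.toL1 (Atrans a b s f) (hf.Atrans s)

theorem dist_AtransL1 (hf : Integrable f) (s x : ℝ) :
    dist (AtransL1 a b hf s) (AtransL1 a b hf x)
      = ∫ t, ‖Atrans a b s f t - Atrans a b x f t‖ := by
  rw [dist_eq_norm, AtransL1, AtransL1, ← Integrable.toL1_sub, L1.norm_of_fun_eq_integral_norm]
  rfl

theorem continuous_AtransL1 (hf : Integrable f) : Continuous (AtransL1 a b hf) :=
  continuous_iff_continuousAt.mpr fun x => tendsto_iff_dist_tendsto_zero.mpr <| by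
    simpa only [dist_AtransL1] using tendsto_integral_norm_Atrans_sub hf x

theorem norm_AtransL1 (hf : Integrable f) (s : ℝ) : ‖AtransL1 a b hf s‖ = ∫ t, ‖f t‖ := by
  rw [AtransL1, L1.norm_of_fun_eq_integral_norm]
  simp_rw [norm_Atrans]
  exact integral_sub_right_eq_self (fun t => ‖f t‖) s

theorem integrable_smul_AtransL1 {g : ℝ → ℂ} (hg : Integrable g) (hf : Integrable f) :
    Integrable fun s => g s • AtransL1 a b hf s :=
  (hg.norm.mul_const (∫ t, ‖f t‖)).mono'
    (hg.aestronglyMeasurable.smul (continuous_AtransL1 hf).aestronglyMeasurable)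
    (.of_forall fun s => by rw [norm_smul, norm_AtransL1])

theorem convA_ae_eq_integral_smul_AtransL1 {g : ℝ → ℂ} (hg : Integrable g) (hf : Integrable f) :
    convA a b g f =ᵐ[volume]
      ⇑(((Real.sqrt (2 * Real.pi * |b|) : ℂ))⁻¹ • ∫ s, g s • AtransL1 a b hf s) := by
  have h := L1.coeFn_integral_ae_eq_integral (integrable_smul_AtransL1 (a := a) (b := b) hg hf)
    (integrable_mul_Atrans (a := a) (b := b) hg hf) (.of_forall fun s => ?_)
  · filter_upwards [Lp.coeFn_smul ((Real.sqrt (2 * Real.pi * |b|) : ℂ))⁻¹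
      (∫ s, g s • AtransL1 a b hf s), h] with t h1 h2
    rw [h1, Pi.smul_apply, h2, convA, smul_eq_mul]
  · filter_upwards [Lp.coeFn_smul (g s) (AtransL1 a b hf s), (hf.Atrans s).coeFn_toL1]
      with t h1 h2
    rw [h1, Pi.smul_apply, AtransL1, h2, smul_eq_mul]

end Atrans

section ClosedSubspace

variable {α : Type*} [MeasurableSpace α] (μ : Measure α)

def IsClosedInL1 (J : Set (α → ℂ)) : Prop :=
  ∀ f : α → ℂ, Integrable f μ → (∀ ε > (0 : ℝ), ∃ g ∈ J, (∫ t, ‖f t - g t‖ ∂μ) < ε) → f ∈ J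

variable {μ} {J : Set (α → ℂ)}

namespace IsClosedInL1

theorem mem_of_ae_eq (hJ : IsClosedInL1 μ J) {f g : α → ℂ} (hf : Integrable f μ) (hg : g ∈ J)
    (hfg : f =ᵐ[μ] g) : f ∈ J := by
  refine hJ f hf fun ε hε => ⟨g, hg, ?_⟩
  rwa [integral_eq_zero_of_ae (hfg.mono fun t ht => by simp [ht])]

theorem mem_iff_of_ae_eq (hJ : IsClosedInL1 μ J) {f g : α → ℂ} (hf : Integrable f μ)
    (hg : Integrable g μ) (hfg : f =ᵐ[μ] g) : f ∈ J ↔ g ∈ J :=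
  ⟨fun h => hJ.mem_of_ae_eq hg h hfg.symm, fun h => hJ.mem_of_ae_eq hf h hfg⟩

theorem coeFn_toL1_mem_iff (hJ : IsClosedInL1 μ J) {f : α → ℂ} (hf : Integrable f μ) :
    ⇑(hf.toL1 f) ∈ J ↔ f ∈ J :=
  hJ.mem_iff_of_ae_eq (L1.integrable_coeFn _) hf hf.coeFn_toL1

theorem isClosed_setOf_coeFn_mem (hJ : IsClosedInL1 μ J) :
    IsClosed {h : α →₁[μ] ℂ | ⇑h ∈ J} := by
  refine isClosed_of_closure_subset fun h hh => hJ _ (L1.integrable_coeFn h) fun ε hε => ?_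
  obtain ⟨k, hk, hhk⟩ := Metric.mem_closure_iff.mp hh ε hε
  refine ⟨k, hk, ?_⟩
  rwa [dist_eq_norm, L1.norm_eq_integral_norm, integral_congr_ae (by
    filter_upwards [Lp.coeFn_sub h k] with t ht using congrArg norm ht)] at hhk

def toL1Submodule (hJ : IsClosedInL1 μ J) (hJzero : (0 : α → ℂ) ∈ J)
    (hJadd : ∀ f ∈ J, ∀ g ∈ J, f + g ∈ J) (hJsmul : ∀ (c : ℂ), ∀ f ∈ J, c • f ∈ J) :
    Submodule ℂ (α →₁[μ] ℂ) where
  carrier := {h | ⇑h ∈ J}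
  add_mem' {h k} hh hk :=
    hJ.mem_of_ae_eq (L1.integrable_coeFn _) (hJadd _ hh _ hk) (Lp.coeFn_add h k)
  zero_mem' := hJ.mem_of_ae_eq (L1.integrable_coeFn _) hJzero (Lp.coeFn_zero ℂ 1 μ)
  smul_mem' c h hh := hJ.mem_of_ae_eq (L1.integrable_coeFn _) (hJsmul c _ hh) (Lp.coeFn_smul c h)

end IsClosedInL1

end ClosedSubspace

/-- A closed subspace `J` of `L¹(ℝ)` is an ideal of `(L¹(ℝ), ⋆_A)` iff it is invariant
under all `A`-translations. -/
theorem ideal_iff_Atrans_invariant (a b : ℝ) (hb : b ≠ 0)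
    (J : Set (ℝ → ℂ))
    (hJint : ∀ f ∈ J, Integrable f)
    (hJzero : (0 : ℝ → ℂ) ∈ J)
    (hJadd : ∀ f ∈ J, ∀ g ∈ J, f + g ∈ J)
    (hJsmul : ∀ (c : ℂ), ∀ f ∈ J, c • f ∈ J)
    (hJclosed : ∀ f : ℝ → ℂ, Integrable f →
      (∀ ε > (0 : ℝ), ∃ g ∈ J, (∫ t : ℝ, ‖f t - g t‖) < ε) → f ∈ J) :
    (∀ g : ℝ → ℂ, Integrable g → ∀ f ∈ J, convA a b g f ∈ J) ↔
      (∀ f ∈ J, ∀ x : ℝ, Atrans a b x f ∈ J) := by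
  have hJ : IsClosedInL1 volume J := hJclosed
  let S := hJ.toL1Submodule hJzero hJadd hJsmul
  have hS : IsClosed (S : Set (ℝ →₁[volume] ℂ)) := hJ.isClosed_setOf_coeFn_mem
  have hc : ((Real.sqrt (2 * Real.pi * |b|) : ℂ))⁻¹ ≠ 0 := by
    have : 0 < Real.sqrt (2 * Real.pi * |b|) := by positivity
    exact inv_ne_zero (Complex.ofReal_ne_zero.mpr this.ne')
  have hconvA {g f : ℝ → ℂ} (hg : Integrable g) (hf : Integrable f) :
      convA a b g f ∈ J ↔ ∫ s, g s • AtransL1 a b hf s ∈ S := by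
    have h := convA_ae_eq_integral_smul_AtransL1 (a := a) (b := b) hg hf
    rw [← S.smul_mem_iff hc]
    exact hJ.mem_iff_of_ae_eq ((L1.integrable_coeFn _).congr h.symm) (L1.integrable_coeFn _) h
  constructor
  · intro hIdeal f hfJ x
    have hf := hJint f hfJ
    rw [← hJ.coeFn_toL1_mem_iff (hf.Atrans x)]
    exact hS.closure_subset (mem_closure_of_forall_integral_smul_mem (continuous_AtransL1 hf)
      (fun g hg => (hconvA hg hf).mp (hIdeal g hg f hfJ)) x)
  · intro hTrans g hg f hfJ
    have hf := hJint f hfJ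
    exact (hconvA hg hf).mpr (Submodule.integral_mem_of_isClosed (S := S.restrictScalars ℝ) hS
      fun s => S.smul_mem _ ((hJ.coeFn_toL1_mem_iff (hf.Atrans s)).mpr (hTrans f hfJ s)))
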